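/- For any group grading of the twisted Heisenberg algebra H_n^λ over an algebraically closed field of characteristic zero, there exists a basis {z, u', u'_1, v'_1, …, u'_k, v'_k} of H_n^λ with u' a homogeneous element of the grading, such that the only nonzero brackets are [u',u'_i] = λ_i u'_i, [u',v'_i] = -λ_i v'_i, and [u'_i,v'_i] = -2λ_i z. -/

import Mathlib

/-- Index type for the standard basis `{z, u, e_i, ê_i}` of the twisted
Heisenberg algebra `H_n^λ`, `n = 2k+2`. -/
abbrev TwIdx (k : ℕ) := Unit ⊕ Unit ⊕ (Fin k × Bool)

/-- The pairs of indices of basis elements with possibly nonzero bracket. -/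
def TwPair {k : ℕ} (p q : TwIdx k) : Prop :=
  ∃ i : Fin k, ∃ s : Bool,
    (p = Sum.inr (Sum.inr (i, s)) ∧ q = Sum.inr (Sum.inr (i, !s))) ∨
    (p = Sum.inr (Sum.inl ()) ∧ q = Sum.inr (Sum.inr (i, s))) ∨
    (p = Sum.inr (Sum.inr (i, s)) ∧ q = Sum.inr (Sum.inl ()))

/-!
Homogeneous elements span `L`, so some homogeneous `w` has `u`-coordinate `1`; write
`w = u + γ z + ∑ (α_i e_i + β_i ê_i)`. Since `z` is central, `ad w` agrees with `ad u` up to terms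
in `F z`: `[w, e_i] = λ_i ê_i - β_i λ_i z` and `[w, ê_i] = λ_i e_i + α_i λ_i z`. Hence
`e_i + ê_i + (α_i - β_i) z` and `e_i - ê_i + (α_i + β_i) z` are eigenvectors of `ad w` for
`λ_i` and `-λ_i`, and together with `z` and `w` they span `L` (using `2 ≠ 0`), so form a basis.
-/

namespace TwIdx

variable {k : ℕ}

abbrev z : TwIdx k := Sum.inl ()
abbrev u : TwIdx k := Sum.inr (Sum.inl ())
-- `e i` and `f i` index `e_i` and `ê_i`.
abbrev e (i : Fin k) : TwIdx k := Sum.inr (Sum.inr (i, false))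
abbrev f (i : Fin k) : TwIdx k := Sum.inr (Sum.inr (i, true))

end TwIdx

theorem not_twPair_z_left {k : ℕ} (q : TwIdx k) : ¬ TwPair .z q := by
  rintro ⟨i, s, (⟨h, _⟩ | ⟨h, _⟩ | ⟨h, _⟩)⟩ <;> simp at h

theorem not_twPair_inr_inr {k : ℕ} {i j : Fin k} {s t : Bool} (h : ¬(i = j ∧ t = !s)) :
    ¬ TwPair (Sum.inr (Sum.inr (i, s))) (Sum.inr (Sum.inr (j, t))) := by
  rintro ⟨i', s', (⟨h1, h2⟩ | ⟨h1, _⟩ | ⟨_, h2⟩)⟩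
  · simp only [Sum.inr.injEq, Prod.mk.injEq] at h1 h2
    exact h ⟨h1.1.trans h2.1.symm, by rw [h2.2, h1.2]⟩
  · simp at h1
  · simp at h2

theorem twPair_u_inr_inr {k : ℕ} (i : Fin k) (s : Bool) : TwPair .u (Sum.inr (Sum.inr (i, s))) :=
  ⟨i, s, .inr (.inl ⟨rfl, rfl⟩)⟩

theorem twPair_inr_inr_u {k : ℕ} (i : Fin k) (s : Bool) : TwPair (Sum.inr (Sum.inr (i, s))) .u :=
  ⟨i, s, .inr (.inr ⟨rfl, rfl⟩)⟩

section

open Module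

variable {F L : Type*} [Field F] [LieRing L] [LieAlgebra F L] {k : ℕ}

theorem Module.Basis.sum_repr_twIdx (b : Basis (TwIdx k) F L) (x : L) :
    b.repr x .z • b .z + b.repr x .u • b .u
      + ∑ i, (b.repr x (.e i) • b (.e i) + b.repr x (.f i) • b (.f i)) = x := by
  conv_rhs => rw [← b.sum_repr x]
  simp only [Fintype.sum_sum_type, Fintype.sum_prod_type, Fintype.sum_bool, Finset.univ_unique,
    Finset.sum_singleton, Finset.sum_add_distrib]
  abel

structure IsTwistedHeisenbergBasis (lam : Fin k → F) (b : Basis (TwIdx k) F L) : Prop where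
  lie_e_f : ∀ i, ⁅b (.e i), b (.f i)⁆ = lam i • b .z
  lie_u_e : ∀ i, ⁅b .u, b (.e i)⁆ = lam i • b (.f i)
  lie_u_f : ∀ i, ⁅b .u, b (.f i)⁆ = lam i • b (.e i)
  lie_eq_zero : ∀ p q, ¬ TwPair p q → ⁅b p, b q⁆ = 0

namespace IsTwistedHeisenbergBasis

variable {lam : Fin k → F} {b : Basis (TwIdx k) F L} (hb : IsTwistedHeisenbergBasis lam b)
include hb

theorem lie_z_left (x : L) : ⁅b .z, x⁆ = 0 := by
  have : LieAlgebra.ad F L (b .z) = 0 :=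
    b.ext fun q ↦ hb.lie_eq_zero _ q (not_twPair_z_left q)
  exact LinearMap.congr_fun this x

theorem lie_z_right (x : L) : ⁅x, b .z⁆ = 0 := by
  rw [← lie_skew, hb.lie_z_left, neg_zero]

theorem lie_e_e (i j : Fin k) : ⁅b (.e i), b (.e j)⁆ = 0 :=
  hb.lie_eq_zero _ _ (not_twPair_inr_inr (by simp))

theorem lie_f_f (i j : Fin k) : ⁅b (.f i), b (.f j)⁆ = 0 :=
  hb.lie_eq_zero _ _ (not_twPair_inr_inr (by simp))

theorem lie_e_f_eq_ite (i j : Fin k) :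
    ⁅b (.e i), b (.f j)⁆ = if i = j then lam j • b .z else 0 := by
  split_ifs with hij
  · exact hij ▸ hb.lie_e_f i
  · exact hb.lie_eq_zero _ _ (not_twPair_inr_inr fun h ↦ hij h.1)

theorem lie_f_e_eq_ite (i j : Fin k) :
    ⁅b (.f i), b (.e j)⁆ = if i = j then -lam j • b .z else 0 := by
  split_ifs with hij
  · rw [hij, ← lie_skew, hb.lie_e_f, neg_smul]
  · exact hb.lie_eq_zero _ _ (not_twPair_inr_inr fun h ↦ hij h.1)

theorem lie_e_right (x : L) (j : Fin k) :
    ⁅x, b (.e j)⁆ = b.repr x .u • lam j • b (.f j) - (b.repr x (.f j) * lam j) • b .z := by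
  conv_lhs => rw [← b.sum_repr_twIdx x]
  simp only [add_lie, sum_lie, smul_lie, hb.lie_z_left, hb.lie_u_e, hb.lie_e_e, hb.lie_f_e_eq_ite,
    smul_ite, smul_zero, zero_add, Finset.sum_ite_eq', Finset.mem_univ, if_true]
  module

theorem lie_f_right (x : L) (j : Fin k) :
    ⁅x, b (.f j)⁆ = b.repr x .u • lam j • b (.e j) + (b.repr x (.e j) * lam j) • b .z := by
  conv_lhs => rw [← b.sum_repr_twIdx x]
  simp only [add_lie, sum_lie, smul_lie, hb.lie_z_left, hb.lie_u_f, hb.lie_f_f, hb.lie_e_f_eq_ite,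
    smul_ite, smul_zero, zero_add, add_zero, Finset.sum_ite_eq', Finset.mem_univ, if_true]
  module

end IsTwistedHeisenbergBasis

noncomputable def Module.Basis.twEigenFamily (b : Basis (TwIdx k) F L) (w : L) : TwIdx k → L
  | Sum.inl _ => b .z
  | Sum.inr (Sum.inl _) => w
  | Sum.inr (Sum.inr (i, false)) =>
      b (.e i) + b (.f i) + (b.repr w (.e i) - b.repr w (.f i)) • b .z
  | Sum.inr (Sum.inr (i, true)) =>
      b (.e i) - b (.f i) + (b.repr w (.e i) + b.repr w (.f i)) • b .z

theorem Module.Basis.top_le_span_twEigenFamily (b : Basis (TwIdx k) F L) {w : L}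
    (hw : b.repr w .u = 1) (h2 : (2 : F) ≠ 0) :
    ⊤ ≤ Submodule.span F (Set.range (b.twEigenFamily w)) := by
  set S := Submodule.span F (Set.range (b.twEigenFamily w))
  have mem (p : TwIdx k) : b.twEigenFamily w p ∈ S := Submodule.subset_span ⟨p, rfl⟩
  have hz : b .z ∈ S := mem .z
  have he (i : Fin k) : b (.e i) ∈ S := by
    have : b (.e i) = (2⁻¹ : F) • (b.twEigenFamily w (.e i) + b.twEigenFamily w (.f i))
        - b.repr w (.e i) • b .z := by
      simp only [twEigenFamily]
      match_scalars <;> field_simp <;> ring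
    rw [this]
    exact S.sub_mem (S.smul_mem _ (S.add_mem (mem _) (mem _))) (S.smul_mem _ hz)
  have hf (i : Fin k) : b (.f i) ∈ S := by
    have : b (.f i) = (2⁻¹ : F) • (b.twEigenFamily w (.e i) - b.twEigenFamily w (.f i))
        + b.repr w (.f i) • b .z := by
      simp only [twEigenFamily]
      match_scalars <;> field_simp <;> ring
    rw [this]
    exact S.add_mem (S.smul_mem _ (S.sub_mem (mem _) (mem _))) (S.smul_mem _ hz)
  have hu : b .u ∈ S := by
    have hsum := b.sum_repr_twIdx w
    rw [hw, one_smul] at hsum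
    have : b .u = w - b.repr w .z • b .z
        - ∑ i, (b.repr w (.e i) • b (.e i) + b.repr w (.f i) • b (.f i)) := by
      linear_combination (norm := module) hsum
    rw [this]
    exact S.sub_mem (S.sub_mem (mem .u) (S.smul_mem _ hz))
      (S.sum_mem fun i _ ↦ S.add_mem (S.smul_mem _ (he i)) (S.smul_mem _ (hf i)))
  rw [← b.span_eq, Submodule.span_le]
  rintro _ ⟨(⟨⟩ | ⟨⟩ | ⟨i, (_ | _)⟩), rfl⟩
  exacts [hz, hu, he i, hf i]

noncomputable def Module.Basis.twEigenBasis (b : Basis (TwIdx k) F L) {w : L}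
    (hw : b.repr w .u = 1) (h2 : (2 : F) ≠ 0) : Basis (TwIdx k) F L :=
  haveI := Module.Finite.of_basis b
  basisOfTopLeSpanOfCardEqFinrank _ (b.top_le_span_twEigenFamily hw h2)
    (Module.finrank_eq_card_basis b).symm

@[simp]
theorem Module.Basis.coe_twEigenBasis (b : Basis (TwIdx k) F L) {w : L}
    (hw : b.repr w .u = 1) (h2 : (2 : F) ≠ 0) : ⇑(b.twEigenBasis hw h2) = b.twEigenFamily w :=
  coe_basisOfTopLeSpanOfCardEqFinrank _ _ _

namespace IsTwistedHeisenbergBasis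

variable {lam : Fin k → F} {b : Basis (TwIdx k) F L} (hb : IsTwistedHeisenbergBasis lam b)
  {w : L} (hw : b.repr w .u = 1)
include hb

theorem lie_twEigenFamily_e_f (i : Fin k) :
    ⁅b.twEigenFamily w (.e i), b.twEigenFamily w (.f i)⁆ = (-2 * lam i) • b.twEigenFamily w .z := by
  simp only [Basis.twEigenFamily, lie_add, add_lie, lie_sub, lie_smul, smul_lie,
    hb.lie_z_left, hb.lie_z_right, hb.lie_e_e, hb.lie_f_f, hb.lie_e_f_eq_ite, hb.lie_f_e_eq_ite,
    if_true]
  module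

theorem lie_twEigenFamily_of_ne {i j : Fin k} (hij : i ≠ j) (s t : Bool) :
    ⁅b.twEigenFamily w (Sum.inr (Sum.inr (i, s))), b.twEigenFamily w (Sum.inr (Sum.inr (j, t)))⁆
      = 0 := by
  cases s <;> cases t <;>
  simp [Basis.twEigenFamily, hb.lie_z_left, hb.lie_z_right, hb.lie_e_e, hb.lie_f_f,
    hb.lie_e_f_eq_ite, hb.lie_f_e_eq_ite, hij]

theorem lie_twEigenFamily_eq_zero {p q : TwIdx k} (hpq : ¬ TwPair p q) :
    ⁅b.twEigenFamily w p, b.twEigenFamily w q⁆ = 0 := by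
  rcases p with ⟨⟩ | ⟨⟩ | ⟨i, s⟩
  · exact hb.lie_z_left _
  all_goals rcases q with ⟨⟩ | ⟨⟩ | ⟨j, t⟩
  · exact hb.lie_z_right _
  · exact lie_self _
  · exact absurd (twPair_u_inr_inr j t) hpq
  · exact hb.lie_z_right _
  · exact absurd (twPair_inr_inr_u i s) hpq
  · obtain rfl | hij := eq_or_ne i j
    · obtain rfl : t = s := by
        cases s <;> cases t <;> simp_all [TwPair]
      exact lie_self _
    · exact hb.lie_twEigenFamily_of_ne hij s t

include hw

theorem lie_twEigenFamily_u_e (i : Fin k) :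
    ⁅b.twEigenFamily w .u, b.twEigenFamily w (.e i)⁆ = lam i • b.twEigenFamily w (.e i) := by
  simp only [Basis.twEigenFamily, lie_add, lie_smul, hb.lie_e_right, hb.lie_f_right,
    hb.lie_z_right, hw]
  module

theorem lie_twEigenFamily_u_f (i : Fin k) :
    ⁅b.twEigenFamily w .u, b.twEigenFamily w (.f i)⁆ = -lam i • b.twEigenFamily w (.f i) := by
  simp only [Basis.twEigenFamily, lie_add, lie_sub, lie_smul, hb.lie_e_right,
    hb.lie_f_right, hb.lie_z_right, hw]
  module

end IsTwistedHeisenbergBasis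

theorem Submodule.exists_mem_apply_eq_one_of_iSup_eq_top {K V ι : Type*} [Field K] [AddCommGroup V]
    [Module K V] {M : ι → Submodule K V} (hM : ⨆ i, M i = ⊤) {φ : V →ₗ[K] K} (hφ : φ ≠ 0) :
    ∃ i, ∃ x ∈ M i, φ x = 1 := by
  obtain ⟨i, x, hx, hφx⟩ : ∃ i, ∃ x ∈ M i, φ x ≠ 0 := by
    by_contra! h
    have : ⊤ ≤ LinearMap.ker φ := hM ▸ iSup_le fun i x hx ↦ h i x hx
    exact hφ (LinearMap.ker_eq_top.mp (top_le_iff.mp this))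
  exact ⟨i, (φ x)⁻¹ • x, (M i).smul_mem _ hx, by simp [hφx]⟩

end

theorem twisted_heisenberg_grading_u_homogeneous_general
    (F : Type*) [Field F] [CharZero F]
    (L : Type*) [LieRing L] [LieAlgebra F L] (k : ℕ)
    (lam : Fin k → F)
    (b : Module.Basis (TwIdx k) F L)
    (hee : ∀ i : Fin k, ⁅b (Sum.inr (Sum.inr (i, false))), b (Sum.inr (Sum.inr (i, true)))⁆
      = lam i • b (Sum.inl ()))
    (hue : ∀ i : Fin k, ⁅b (Sum.inr (Sum.inl ())), b (Sum.inr (Sum.inr (i, false)))⁆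
      = lam i • b (Sum.inr (Sum.inr (i, true))))
    (huf : ∀ i : Fin k, ⁅b (Sum.inr (Sum.inl ())), b (Sum.inr (Sum.inr (i, true)))⁆
      = lam i • b (Sum.inr (Sum.inr (i, false))))
    (h0 : ∀ p q : TwIdx k, ¬ TwPair p q → ⁅b p, b q⁆ = 0)
    (G : Type*) [AddCommGroup G] [DecidableEq G]
    (Lg : G → Submodule F L) (hint : DirectSum.IsInternal Lg) :
    ∃ c : Module.Basis (TwIdx k) F L,
      c (Sum.inl ()) = b (Sum.inl ()) ∧
      (∃ g : G, c (Sum.inr (Sum.inl ())) ∈ Lg g) ∧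
      (∀ i : Fin k, ⁅c (Sum.inr (Sum.inl ())), c (Sum.inr (Sum.inr (i, false)))⁆
        = lam i • c (Sum.inr (Sum.inr (i, false)))) ∧
      (∀ i : Fin k, ⁅c (Sum.inr (Sum.inl ())), c (Sum.inr (Sum.inr (i, true)))⁆
        = -(lam i) • c (Sum.inr (Sum.inr (i, true)))) ∧
      (∀ i : Fin k, ⁅c (Sum.inr (Sum.inr (i, false))), c (Sum.inr (Sum.inr (i, true)))⁆
        = (-(2 : F) * lam i) • c (Sum.inl ())) ∧
      (∀ p q : TwIdx k, ¬ TwPair p q → ⁅c p, c q⁆ = 0) := by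
  have hb : IsTwistedHeisenbergBasis lam b := ⟨hee, hue, huf, h0⟩
  have hcoord : b.coord .u ≠ 0 := fun h ↦ by simpa using LinearMap.congr_fun h (b .u)
  obtain ⟨g, w, hwg, hw⟩ :=
    Submodule.exists_mem_apply_eq_one_of_iSup_eq_top hint.submodule_iSup_eq_top hcoord
  refine ⟨b.twEigenBasis hw two_ne_zero, ?_, ⟨g, ?_⟩, ?_, ?_, ?_, ?_⟩ <;>
    rw [Module.Basis.coe_twEigenBasis b hw two_ne_zero]
  · rfl
  · exact hwg
  · exact hb.lie_twEigenFamily_u_e hw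
  · exact hb.lie_twEigenFamily_u_f hw
  · exact hb.lie_twEigenFamily_e_f
  · exact fun p q ↦ hb.lie_twEigenFamily_eq_zero

/-- Lemma 6.3: for any group grading of the twisted Heisenberg algebra
`H_n^λ`, there is a basis `{z, u', u'_1, v'_1, …, u'_k, v'_k}` with `u'`
homogeneous, whose only nonzero brackets are `[u',u'_i] = λ_i u'_i`,
`[u',v'_i] = -λ_i v'_i` and `[u'_i,v'_i] = -2λ_i z`. -/
theorem twisted_heisenberg_grading_u_homogeneous
    (F : Type*) [Field F] [IsAlgClosed F] [CharZero F]
    (L : Type*) [LieRing L] [LieAlgebra F L] (k : ℕ) (hk : 0 < k)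
    (lam : Fin k → F) (hlam : ∀ i, lam i ≠ 0)
    (b : Module.Basis (TwIdx k) F L)
    (hee : ∀ i : Fin k, ⁅b (Sum.inr (Sum.inr (i, false))), b (Sum.inr (Sum.inr (i, true)))⁆
      = lam i • b (Sum.inl ()))
    (hue : ∀ i : Fin k, ⁅b (Sum.inr (Sum.inl ())), b (Sum.inr (Sum.inr (i, false)))⁆
      = lam i • b (Sum.inr (Sum.inr (i, true))))
    (huf : ∀ i : Fin k, ⁅b (Sum.inr (Sum.inl ())), b (Sum.inr (Sum.inr (i, true)))⁆
      = lam i • b (Sum.inr (Sum.inr (i, false))))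
    (h0 : ∀ p q : TwIdx k, ¬ TwPair p q → ⁅b p, b q⁆ = 0)
    (G : Type*) [AddCommGroup G] [DecidableEq G]
    (Lg : G → Submodule F L) (hint : DirectSum.IsInternal Lg)
    (hgr : ∀ (g h : G) (x y : L), x ∈ Lg g → y ∈ Lg h → ⁅x, y⁆ ∈ Lg (g + h)) :
    ∃ c : Module.Basis (TwIdx k) F L,
      c (Sum.inl ()) = b (Sum.inl ()) ∧
      (∃ g : G, c (Sum.inr (Sum.inl ())) ∈ Lg g) ∧
      (∀ i : Fin k, ⁅c (Sum.inr (Sum.inl ())), c (Sum.inr (Sum.inr (i, false)))⁆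
        = lam i • c (Sum.inr (Sum.inr (i, false)))) ∧
      (∀ i : Fin k, ⁅c (Sum.inr (Sum.inl ())), c (Sum.inr (Sum.inr (i, true)))⁆
        = -(lam i) • c (Sum.inr (Sum.inr (i, true)))) ∧
      (∀ i : Fin k, ⁅c (Sum.inr (Sum.inr (i, false))), c (Sum.inr (Sum.inr (i, true)))⁆
        = (-(2 : F) * lam i) • c (Sum.inl ())) ∧
      (∀ p q : TwIdx k, ¬ TwPair p q → ⁅c p, c q⁆ = 0) :=
  twisted_heisenberg_grading_u_homogeneous_general F L k lam b hee hue huf h0 G Lg hint
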